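/- For s > 0, an integer k, and 0 < α < 1, define the Laplace coefficient b_s^{(k)}(α) := (1/π) ∫₀^{2π} cos(kθ) (1 − 2α cos θ + α²)^{−s} dθ, and define Ā(α) := (3/4) α b_{3/2}^{(1)}(α) − (1/2) α b_{3/2}^{(3)}(α) − α² b_{3/2}^{(2)}(α) and B̄(α) := (3/4) α b_{1/2}^{(1)}(α) + (3/2) α b_{3/2}^{(0)}(α) − α² b_{3/2}^{(1)}(α) − (1/2) α b_{3/2}^{(2)}(α). Then at α = 2^{−2/3} (i.e., α = 1/∛4, the semi major axis ratio of a 2:1 mean-motion resonant pair), both Ā(α) > 0 and B̄(α) > 0. -/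

import Mathlib

open Real

/-- The Laplace coefficient
`b_s^(k)(α) = (1/π) ∫₀^{2π} cos(kθ) (1 − 2α cos θ + α²)^{−s} dθ`. -/
noncomputable def laplaceCoeff (s : ℝ) (k : ℤ) (α : ℝ) : ℝ :=
  (1 / π) * ∫ θ in (0 : ℝ)..(2 * π),
    Real.cos (k * θ) * (1 - 2 * α * Real.cos θ + α ^ 2) ^ (-s)

/-- The coefficient `Ā` of the first-order resonant part of the averaged
perturbing function. -/
noncomputable def Abar (α : ℝ) : ℝ :=
  3 / 4 * α * laplaceCoeff (3 / 2) 1 α - 1 / 2 * α * laplaceCoeff (3 / 2) 3 α -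
    α ^ 2 * laplaceCoeff (3 / 2) 2 α

/-- The coefficient `B̄` of the first-order resonant part of the averaged
perturbing function. -/
noncomputable def Bbar (α : ℝ) : ℝ :=
  3 / 4 * α * laplaceCoeff (1 / 2) 1 α + 3 / 2 * α * laplaceCoeff (3 / 2) 0 α -
    α ^ 2 * laplaceCoeff (3 / 2) 1 α - 1 / 2 * α * laplaceCoeff (3 / 2) 2 α

/-!
Write `c = cos θ` and `W(θ) = sqDist α θ = 1 - 2α cos θ + α²`. Expanding `cos 2θ`, `cos 3θ` (and
writing `W^{-1/2} = W · W^{-3/2}`) gives `π Ā = ∫₀^{2π} P_A(cos θ) W^{-3/2}` and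
`π B̄ = ∫₀^{2π} P_B(cos θ) W^{-3/2}` with a cubic `P_A` and a quadratic `P_B`, neither of which is
positive on `[-1, 1]`. For every polynomial `N`, `sin θ · N(cos θ) · W^{-1/2}` is `2π`-periodic with
derivative `(D N)(cos θ) · W^{-3/2}` (`D N = derivNumerator (1/2) α N`), so `P` may be replaced by
`P - D N`. For `B̄` the constant `N = 1 + 3α/2` already leaves a linear integrand, positive on
`[-1, 1]` near `α = 0.63`. For `Ā` the cancellation is delicate (`Ā ≈ 0.055`): a degree-9 `N` with
coefficients in `ℚ(α)`, `α³ = 1/4`, leaves `(1 + c) A(c)² + (1 - c) B(c)² + r₀ + r₁ c` with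
rational quintics `A`, `B` and `r₀ ± r₁ ≈ 0.003`.
-/

open Polynomial Set intervalIntegral MeasureTheory

noncomputable def sqDist (α θ : ℝ) : ℝ := 1 - 2 * α * cos θ + α ^ 2

theorem sqDist_pos {α : ℝ} (hα : |α| < 1) (θ : ℝ) : 0 < sqDist α θ := by
  have hcos : α * cos θ ≤ |α| :=
    calc α * cos θ ≤ |α| * |cos θ| := (le_abs_self _).trans (abs_mul _ _).le
      _ ≤ |α| := mul_le_of_le_one_right (abs_nonneg α) (abs_cos_le_one θ)
  unfold sqDist
  nlinarith [sq_abs α, mul_pos (sub_pos.2 hα) (sub_pos.2 hα)]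

theorem continuous_sqDist_rpow {α : ℝ} (hα : |α| < 1) (t : ℝ) :
    Continuous fun θ => sqDist α θ ^ t :=
  (show Continuous (sqDist α) by unfold sqDist; fun_prop).rpow_const
    fun θ => Or.inl (sqDist_pos hα θ).ne'

theorem intervalIntegrable_mul_sqDist_rpow {α : ℝ} (hα : |α| < 1) {f : ℝ → ℝ}
    (hf : Continuous f) (t a b : ℝ) :
    IntervalIntegrable (fun θ => f θ * sqDist α θ ^ t) volume a b :=
  (hf.mul (continuous_sqDist_rpow hα t)).intervalIntegrable a b

theorem laplaceCoeff_eq_integral_sqDist (s : ℝ) (k : ℤ) (α : ℝ) :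
    laplaceCoeff s k α = π⁻¹ * ∫ θ in (0)..(2 * π), cos (k * θ) * sqDist α θ ^ (-s) := by
  rw [laplaceCoeff, one_div]
  rfl

noncomputable def derivNumerator (s α : ℝ) (N : ℝ[X]) (c : ℝ) : ℝ :=
  (c * N.eval c - (1 - c ^ 2) * N.derivative.eval c) * (1 - 2 * α * c + α ^ 2) -
    2 * s * α * (1 - c ^ 2) * N.eval c

theorem hasDerivAt_sin_mul_eval_cos_mul_sqDist_rpow {α : ℝ} (hα : |α| < 1) (s : ℝ)
    (N : ℝ[X]) (θ : ℝ) :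
    HasDerivAt (fun θ => sin θ * N.eval (cos θ) * sqDist α θ ^ (-s))
      (derivNumerator s α N (cos θ) * sqDist α θ ^ (-s - 1)) θ := by
  have hW : HasDerivAt (sqDist α) (2 * α * sin θ) θ := by
    refine ((((hasDerivAt_cos θ).const_mul (2 * α)).const_sub 1).add_const (α ^ 2)).congr_deriv ?_
    ring
  have hN : HasDerivAt (fun θ => N.eval (cos θ)) (N.derivative.eval (cos θ) * -sin θ) θ :=
    (N.hasDerivAt (cos θ)).comp θ (hasDerivAt_cos θ)
  refine (((hasDerivAt_sin θ).mul hN).mul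
    (hW.rpow_const (Or.inl (sqDist_pos hα θ).ne'))).congr_deriv ?_
  have hsplit : sqDist α θ ^ (-s) = sqDist α θ ^ (-s - 1) * sqDist α θ := by
    rw [← rpow_add_one (sqDist_pos hα θ).ne', sub_add_cancel]
  rw [hsplit, derivNumerator, Pi.mul_apply, sqDist]
  linear_combination -((N.derivative.eval (cos θ) * (1 - 2 * α * cos θ + α ^ 2) +
    2 * s * α * N.eval (cos θ)) * (1 - 2 * α * cos θ + α ^ 2) ^ (-s - 1)) * sin_sq_add_cos_sq θ

theorem integral_derivNumerator_mul_sqDist_rpow {α : ℝ} (hα : |α| < 1) (s : ℝ) (N : ℝ[X]) :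
    ∫ θ in (0)..(2 * π), derivNumerator s α N (cos θ) * sqDist α θ ^ (-s - 1) = 0 := by
  rw [integral_eq_sub_of_hasDerivAt
    (fun θ _ => hasDerivAt_sin_mul_eval_cos_mul_sqDist_rpow hα s N θ)
    (intervalIntegrable_mul_sqDist_rpow hα (by unfold derivNumerator; fun_prop) _ _ _)]
  simp

theorem integral_eq_of_eq_add_derivNumerator {α s : ℝ} (hα : |α| < 1) {P Q : ℝ → ℝ}
    (hQ : Continuous Q) (N : ℝ[X]) (h : ∀ c, P c = Q c + derivNumerator s α N c) :
    ∫ θ in (0)..(2 * π), P (cos θ) * sqDist α θ ^ (-s - 1) =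
      ∫ θ in (0)..(2 * π), Q (cos θ) * sqDist α θ ^ (-s - 1) := by
  simp_rw [h, add_mul]
  rw [integral_add (intervalIntegrable_mul_sqDist_rpow hα (by fun_prop) _ _ _)
    (intervalIntegrable_mul_sqDist_rpow hα (by unfold derivNumerator; fun_prop) _ _ _),
    integral_derivNumerator_mul_sqDist_rpow hα, add_zero]

theorem integral_comp_cos_mul_sqDist_rpow_pos {α : ℝ} (hα : |α| < 1) {Q : ℝ → ℝ}
    (hQ : Continuous Q) (hpos : ∀ c ∈ Icc (-1) 1, 0 < Q c) (t : ℝ) :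
    0 < ∫ θ in (0)..(2 * π), Q (cos θ) * sqDist α θ ^ t :=
  intervalIntegral_pos_of_pos_on (intervalIntegrable_mul_sqDist_rpow hα (by fun_prop) t _ _)
    (fun θ _ => mul_pos (hpos _ ⟨neg_one_le_cos θ, cos_le_one θ⟩)
      (rpow_pos_of_pos (sqDist_pos hα θ) t))
    (by positivity)

theorem add_mul_pos_of_mem_Icc {a b c : ℝ} (hc : c ∈ Icc (-1) 1) (h₁ : 0 < a - b)
    (h₂ : 0 < a + b) : 0 < a + b * c := by
  nlinarith [mul_nonneg h₁.le (sub_nonneg.2 hc.2), mul_nonneg h₂.le (neg_le_iff_add_nonneg.1 hc.1)]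

noncomputable def abarNumerator (α c : ℝ) : ℝ :=
  α ^ 2 + 9 / 4 * α * c - 2 * α ^ 2 * c ^ 2 - 2 * α * c ^ 3

noncomputable def bbarNumerator (α c : ℝ) : ℝ :=
  2 * α + (3 / 4 * α - α ^ 2 + 3 / 4 * α ^ 3) * c - (α + 3 / 2 * α ^ 2) * c ^ 2

theorem Abar_eq_integral {α : ℝ} (hα : |α| < 1) :
    Abar α = π⁻¹ * ∫ θ in (0)..(2 * π), abarNumerator α (cos θ) * sqDist α θ ^ (-(3 / 2) : ℝ) := by
  have hI (k : ℤ) : IntervalIntegrable (fun θ => cos (k * θ) * sqDist α θ ^ (-(3 / 2) : ℝ))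
      volume 0 (2 * π) := intervalIntegrable_mul_sqDist_rpow hα (by fun_prop) _ _ _
  have hsplit : ∫ θ in (0)..(2 * π), abarNumerator α (cos θ) * sqDist α θ ^ (-(3 / 2) : ℝ) =
      3 / 4 * α * (∫ θ in (0)..(2 * π), cos ((1 : ℤ) * θ) * sqDist α θ ^ (-(3 / 2) : ℝ))
      - 1 / 2 * α * (∫ θ in (0)..(2 * π), cos ((3 : ℤ) * θ) * sqDist α θ ^ (-(3 / 2) : ℝ))
      - α ^ 2 * (∫ θ in (0)..(2 * π), cos ((2 : ℤ) * θ) * sqDist α θ ^ (-(3 / 2) : ℝ)) := by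
    rw [← intervalIntegral.integral_const_mul, ← intervalIntegral.integral_const_mul,
      ← intervalIntegral.integral_const_mul,
      ← integral_sub ((hI 1).const_mul _) ((hI 3).const_mul _),
      ← integral_sub (((hI 1).const_mul _).sub ((hI 3).const_mul _)) ((hI 2).const_mul _)]
    refine integral_congr fun θ _ => ?_
    push_cast
    rw [abarNumerator, cos_two_mul, cos_three_mul, one_mul]
    ring
  rw [hsplit, Abar, laplaceCoeff_eq_integral_sqDist, laplaceCoeff_eq_integral_sqDist,
    laplaceCoeff_eq_integral_sqDist]
  ring

theorem Bbar_eq_integral {α : ℝ} (hα : |α| < 1) :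
    Bbar α = π⁻¹ * ∫ θ in (0)..(2 * π), bbarNumerator α (cos θ) * sqDist α θ ^ (-(3 / 2) : ℝ) := by
  have hI (s : ℝ) (k : ℤ) : IntervalIntegrable (fun θ => cos (k * θ) * sqDist α θ ^ (-s))
      volume 0 (2 * π) := intervalIntegrable_mul_sqDist_rpow hα (by fun_prop) _ _ _
  have hsplit : ∫ θ in (0)..(2 * π), bbarNumerator α (cos θ) * sqDist α θ ^ (-(3 / 2) : ℝ) =
      3 / 4 * α * (∫ θ in (0)..(2 * π), cos ((1 : ℤ) * θ) * sqDist α θ ^ (-(1 / 2) : ℝ))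
      + 3 / 2 * α * (∫ θ in (0)..(2 * π), cos ((0 : ℤ) * θ) * sqDist α θ ^ (-(3 / 2) : ℝ))
      - α ^ 2 * (∫ θ in (0)..(2 * π), cos ((1 : ℤ) * θ) * sqDist α θ ^ (-(3 / 2) : ℝ))
      - 1 / 2 * α * (∫ θ in (0)..(2 * π), cos ((2 : ℤ) * θ) * sqDist α θ ^ (-(3 / 2) : ℝ)) := by
    rw [← intervalIntegral.integral_const_mul, ← intervalIntegral.integral_const_mul,
      ← intervalIntegral.integral_const_mul, ← intervalIntegral.integral_const_mul,
      ← integral_add ((hI _ 1).const_mul _) ((hI _ 0).const_mul _),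
      ← integral_sub (((hI _ 1).const_mul _).add ((hI _ 0).const_mul _)) ((hI _ 1).const_mul _),
      ← integral_sub ((((hI _ 1).const_mul _).add ((hI _ 0).const_mul _)).sub
        ((hI _ 1).const_mul _)) ((hI _ 2).const_mul _)]
    refine integral_congr fun θ _ => ?_
    have hW := rpow_add_one (sqDist_pos hα θ).ne' (-(3 / 2))
    rw [show (-(3 / 2) + 1 : ℝ) = -(1 / 2) by norm_num] at hW
    push_cast
    rw [hW, bbarNumerator, cos_two_mul, zero_mul, cos_zero, one_mul, sqDist]
    ring
  rw [hsplit, Bbar, laplaceCoeff_eq_integral_sqDist, laplaceCoeff_eq_integral_sqDist,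
    laplaceCoeff_eq_integral_sqDist, laplaceCoeff_eq_integral_sqDist]
  ring

theorem Bbar_pos {α : ℝ} (hα₀ : 0 < α) (hα₁ : α < 1)
    (h : 1 + 3 / 4 * α + 2 * α ^ 2 + 3 / 4 * α ^ 3 < 3 * α + 3 / 2 * α ^ 2) : 0 < Bbar α := by
  have hα : |α| < 1 := abs_lt.2 ⟨by linarith, hα₁⟩
  rw [Bbar_eq_integral hα, show (-(3 / 2) : ℝ) = -(1 / 2) - 1 by norm_num,
    integral_eq_of_eq_add_derivNumerator hα
      (Q := fun c => 3 * α + 3 / 2 * α ^ 2 + -(1 + 3 / 4 * α + 2 * α ^ 2 + 3 / 4 * α ^ 3) * c)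
      (by fun_prop) (C (1 + 3 / 2 * α))
      fun c => by
        simp only [bbarNumerator, derivNumerator, eval_C, derivative_C, eval_zero]
        ring]
  exact mul_pos (inv_pos.2 pi_pos) (integral_comp_cos_mul_sqDist_rpow_pos hα (by fun_prop)
    (fun c hc => add_mul_pos_of_mem_Icc hc (by rw [sub_neg_eq_add]; positivity) (by linarith)) _)

theorem mem_Ioo_of_pow_three_eq_quarter {α : ℝ} (h : α ^ 3 = 1 / 4) :
    α ∈ Ioo (62996 / 100000) (62997 / 100000) := by
  have hα : 0 < α := (Odd.pow_pos_iff (n := 3) (by decide)).1 (by rw [h]; norm_num)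
  exact ⟨lt_of_pow_lt_pow_left₀ 3 hα.le (by rw [h]; norm_num),
    lt_of_pow_lt_pow_left₀ 3 (by norm_num) (by rw [h]; norm_num)⟩

/- The certificate for `Ā` was computed offline: a linear program for the `N` maximising
`min_{[-1,1]} (P_A - D N)`, a Fejér–Riesz factorisation of that minimiser (less half its minimum)
into `(1 + c) A² + (1 - c) B²` with `A`, `B` rounded to five decimals, and finally an exact
reduction of `P_A - (1 + c) A² - (1 - c) B²` in `ℚ(α)` to `D N + r₀ + r₁ c`. -/

noncomputable def abarSosPlus (c : ℝ) : ℝ :=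
  -967 / 25000 + 3001 / 12500 * c + 46357 / 100000 * c ^ 2 - 15761 / 12500 * c ^ 3 -
    30829 / 50000 * c ^ 4 + 6253 / 5000 * c ^ 5

noncomputable def abarSosMinus (c : ℝ) : ℝ :=
  7051 / 100000 + 63751 / 100000 * c - 40083 / 50000 * c ^ 2 - 304823 / 100000 * c ^ 3 +
    52039 / 50000 * c ^ 4 + 35383 / 12500 * c ^ 5

noncomputable def abarReduced (α c : ℝ) : ℝ :=
  (1 + c) * abarSosPlus c ^ 2 + (1 - c) * abarSosMinus c ^ 2 +
    ((-10732332132313747 / 10210200000000000 + 369357645713813 / 364650000000000 * α +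
        60813316429981 / 58012500000000 * α ^ 2) +
      (-37332940685184541 / 30630600000000000 + 2332495036404023 / 7657650000000000 * α +
        1238390548645667 / 478603125000000 * α ^ 2) * c)

noncomputable def abarPrimitivePoly (α : ℝ) : ℝ[X] :=
  C (1826049211818961 / 2552550000000000 + 2469193311754859 / 2552550000000000 * α -
      425793233699567 / 147262500000000 * α ^ 2) +
  C (-3269521538698169 / 7657650000000000 + 3220450581485419 / 7657650000000000 * α -
      942087656952229 / 1914412500000000 * α ^ 2) * X +
  C (962899416695257 / 7657650000000000 - 310820019776789 / 273487500000000 * α +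
      277862500594061 / 957206250000000 * α ^ 2) * X ^ 2 +
  C (422638404850931 / 7657650000000000 + 1725580291619287 / 3828825000000000 * α -
      465900293667803 / 319068750000000 * α ^ 2) * X ^ 3 +
  C (-8292402548713 / 10725000000000 - 5515913538793 / 22790625000000 * α +
      364597777814323 / 273487500000000 * α ^ 2) * X ^ 4 +
  C (3031250284093 / 7012500000000 - 10826073805783 / 11395312500000 * α -
      5319620329367 / 7012500000000 * α ^ 2) * X ^ 5 +
  C (955283862661 / 2071875000000 + 593789928721 / 517968750000 * α -
      1343476154451 / 690625000000 * α ^ 2) * X ^ 6 +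
  C (-10719047307 / 26562500000 + 4851361797 / 26562500000 * α +
      3564364931 / 1593750000 * α ^ 2) * X ^ 7 +
  C (-212122449 / 1062500000 - 212122449 / 265625000 * α +
      669433211 / 1328125000 * α ^ 2) * X ^ 8 +
  C (-212122449 / 156250000 * α ^ 2) * X ^ 9

theorem abarNumerator_eq {α : ℝ} (h : α ^ 3 = 1 / 4) (c : ℝ) :
    abarNumerator α c = abarReduced α c + derivNumerator (1 / 2) α (abarPrimitivePoly α) c := by
  have h4 : α ^ 4 = α / 4 := by linear_combination α * h
  simp only [abarNumerator, abarReduced, abarSosPlus, abarSosMinus, derivNumerator,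
    abarPrimitivePoly, eval_add, eval_mul, eval_C, eval_X, eval_pow, derivative_add,
    derivative_mul, derivative_C, derivative_X, derivative_X_pow, zero_mul, zero_add, mul_one]
  ring_nf
  simp only [h, h4]
  ring

theorem abarReduced_pos {α c : ℝ} (hα : α ∈ Ioo (62996 / 100000) (62997 / 100000))
    (hc : c ∈ Icc (-1) 1) : 0 < abarReduced α c := by
  obtain ⟨hl, hu⟩ := hα
  have hl2 : (62996 / 100000 : ℝ) ^ 2 < α ^ 2 := by gcongr
  have hu2 : α ^ 2 < (62997 / 100000 : ℝ) ^ 2 := by gcongr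
  have hsos : 0 ≤ (1 + c) * abarSosPlus c ^ 2 + (1 - c) * abarSosMinus c ^ 2 :=
    add_nonneg (mul_nonneg (by linarith [hc.1]) (sq_nonneg _))
      (mul_nonneg (by linarith [hc.2]) (sq_nonneg _))
  exact add_pos_of_nonneg_of_pos hsos (add_mul_pos_of_mem_Icc hc (by linarith) (by linarith))

theorem Abar_pos_of_pow_three_eq_quarter {α : ℝ} (h : α ^ 3 = 1 / 4) : 0 < Abar α := by
  have hα := mem_Ioo_of_pow_three_eq_quarter h
  have hα₁ : |α| < 1 := abs_lt.2 ⟨by linarith [hα.1], by linarith [hα.2]⟩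
  have hQ : Continuous (abarReduced α) := by
    unfold abarReduced abarSosPlus abarSosMinus
    fun_prop
  rw [Abar_eq_integral hα₁, show (-(3 / 2) : ℝ) = -(1 / 2) - 1 by norm_num,
    integral_eq_of_eq_add_derivNumerator hα₁ hQ (abarPrimitivePoly α) (abarNumerator_eq h)]
  exact mul_pos (inv_pos.2 pi_pos)
    (integral_comp_cos_mul_sqDist_rpow_pos hα₁ hQ (fun c hc => abarReduced_pos hα hc) _)

/-- At the semi major axis ratio `α = 2^{−2/3} = 1/∛4` of a 2:1 mean-motion
resonant pair, both `Ā(α) > 0` and `B̄(α) > 0`. -/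
theorem Abar_Bbar_pos_at_resonant_ratio :
    0 < Abar ((2 : ℝ) ^ (-(2 : ℝ) / 3)) ∧ 0 < Bbar ((2 : ℝ) ^ (-(2 : ℝ) / 3)) := by
  have h : ((2 : ℝ) ^ (-(2 : ℝ) / 3)) ^ 3 = 1 / 4 := by
    rw [← rpow_natCast, ← rpow_mul zero_le_two]
    norm_num
  obtain ⟨hl, hu⟩ := mem_Ioo_of_pow_three_eq_quarter h
  refine ⟨Abar_pos_of_pow_three_eq_quarter h, Bbar_pos (by linarith) (by linarith) ?_⟩
  nlinarith
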